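/- Let τ_a < τ_b < τ_c be integers, let x : ℤ → ℝ^M be a flow, and let μ_1, μ_2 ∈ ℝ^M be fixed parameter vectors. Suppose τ_b is optimal for the segmentation problem with both parameter vectors fixed, i.e., for every integer τ̃_b with τ_a ≤ τ̃_b ≤ τ_c, F(τ_a+1, τ_b, x, μ_1) + F(τ_b+1, τ_c, x, μ_2) ≤ F(τ_a+1, τ̃_b, x, μ_1) + F(τ̃_b+1, τ_c, x, μ_2). Then for every integer t with τ_a ≤ t ≤ τ_b and every integer τ̃_b with t ≤ τ̃_b ≤ τ_c, F(t+1, τ_b, x, μ_1) + F(τ_b+1, τ_c, x, μ_2) ≤ F(t+1, τ̃_b, x, μ_1) + F(τ̃_b+1, τ_c, x, μ_2); that is, τ_b remains an optimal switching time when the decision is re-evaluated at any later time t ≤ τ_b with the same fixed parameter vectors. -/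
import Mathlib

/-- The asymmetric quadratic penalty: `φ(a,b) = C(a−b)² if a > b, else (a−b)²`. -/
noncomputable def phi (C a b : ℝ) : ℝ := if a > b then C * (a - b) ^ 2 else (a - b) ^ 2

/-- `Φ(v,μ) = Σ_{m} φ(v_m, μ_m)`. -/
noncomputable def Phi (M : ℕ) (C : ℝ) (v μ : Fin M → ℝ) : ℝ :=
  ∑ m : Fin M, phi C (v m) (μ m)

/-- The fit `F(t_a, t_b, x, μ) = Σ_{t=t_a}^{t_b} Φ(x(t), μ)`, equal to `0` when `t_b < t_a`. -/
noncomputable def fit (M : ℕ) (C : ℝ) (ta tb : ℤ) (x : ℤ → Fin M → ℝ) (μ : Fin M → ℝ) : ℝ :=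
  ∑ t ∈ Finset.Icc ta tb, Phi M C (x t) μ

lemma fit_Ioc (M : ℕ) (C : ℝ) (a b : ℤ) (x : ℤ → Fin M → ℝ) (μ : Fin M → ℝ) :
    fit M C (a + 1) b x μ = ∑ t ∈ Finset.Ioc a b, Phi M C (x t) μ := by
  unfold fit
  congr 1
  ext t
  simp [Int.add_one_le_iff]

lemma fit_split (M : ℕ) (C : ℝ) (a t b : ℤ) (hat : a ≤ t) (htb : t ≤ b)
    (x : ℤ → Fin M → ℝ) (μ : Fin M → ℝ) :
    fit M C (a + 1) b x μ = fit M C (a + 1) t x μ + fit M C (t + 1) b x μ := by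
  rw [fit_Ioc, fit_Ioc, fit_Ioc]
  rw [← Finset.Ioc_union_Ioc_eq_Ioc hat htb, Finset.sum_union]
  simp [Finset.disjoint_left]; intro s hs1 hs2 hs3; linarith

theorem stmt_2 (M : ℕ) (hM : 1 ≤ M) (C : ℝ) (hC : 1 ≤ C)
    (τa τb τc : ℤ) (hab : τa < τb) (hbc : τb < τc)
    (x : ℤ → Fin M → ℝ) (μ1 μ2 : Fin M → ℝ)
    (hopt : ∀ τb' : ℤ, τa ≤ τb' → τb' ≤ τc →
      fit M C (τa + 1) τb x μ1 + fit M C (τb + 1) τc x μ2 ≤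
        fit M C (τa + 1) τb' x μ1 + fit M C (τb' + 1) τc x μ2) :
    ∀ t : ℤ, τa ≤ t → t ≤ τb →
      ∀ τb' : ℤ, t ≤ τb' → τb' ≤ τc →
        fit M C (t + 1) τb x μ1 + fit M C (τb + 1) τc x μ2 ≤
          fit M C (t + 1) τb' x μ1 + fit M C (τb' + 1) τc x μ2 := by
  intro t hat htb τb' htb' hbc'
  have h := hopt τb' (hat.trans htb') hbc'
  rw [fit_split M C τa t τb hat htb, fit_split M C τa t τb' hat htb'] at h
  linarith
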